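/- The system β₁ = −ελ₁ + 13λ₁²/(48π²) + 3λ₁λ₂/(20π²) + 27λ₂²/(2500π²) = 0, β₂ = −ελ₂ + λ₁λ₂/(4π²) + 9λ₂²/(50π²) = 0 with ε > 0 has exactly three real solutions: (0,0), (48π²ε/13, 0), and (2π²ε, 25π²ε/9), and the last solution is a double root of the polynomial system (the Jacobian ∂β_i/∂λ_j is singular there). -/

import Mathlib

/-!
Multiplying by `π²` and writing `μ = 25λ₁ + 18λ₂ - 100π²ε`, the beta functions become
`30000 π² β₁ = (25λ₁ - 18λ₂)² + 300 λ₁ μ` and `100 π² β₂ = λ₂ μ`. So either `λ₂ = 0`, where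
`β₁ = 0` is a quadratic in `λ₁` with roots `0` and `48π²ε/13`, or `μ = 0`, where `β₁ = 0` forces
the square `(25λ₁ - 18λ₂)²` to vanish. The line `μ = 0` is thus tangent to the conic `β₁ = 0`,
which is why the third fixed point is a double root.
-/

open Real Polynomial

/-- The one-loop beta functions of the `S₆ × ℤ₂` (restricted Potts) Landau theory. -/
noncomputable def beta2 (ε : ℝ) : Fin 2 → (Fin 2 → ℝ) → ℝ :=
  ![fun l => -ε * l 0 + 13 * l 0 ^ 2 / (48 * π ^ 2) + 3 * l 0 * l 1 / (20 * π ^ 2)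
      + 27 * l 1 ^ 2 / (2500 * π ^ 2),
    fun l => -ε * l 1 + l 0 * l 1 / (4 * π ^ 2) + 9 * l 1 ^ 2 / (50 * π ^ 2)]

/-- The Jacobian matrix `∂βᵢ/∂λⱼ` at the point `p`. -/
noncomputable def jacobian2 (ε : ℝ) (p : Fin 2 → ℝ) : Matrix (Fin 2) (Fin 2) ℝ :=
  Matrix.of fun i j => fderiv ℝ (beta2 ε i) p (Pi.single j 1)

theorem factored_beta_system_iff (k l₁ l₂ : ℝ) :
    ((25 * l₁ - 18 * l₂) ^ 2 + 300 * l₁ * (25 * l₁ + 18 * l₂ - 100 * k) = 0 ∧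
      l₂ * (25 * l₁ + 18 * l₂ - 100 * k) = 0) ↔
    ((l₁, l₂) = (0, 0) ∨ (l₁, l₂) = (48 * k / 13, 0) ∨ (l₁, l₂) = (2 * k, 25 * k / 9)) := by
  simp only [Prod.mk.injEq]
  constructor
  · rintro ⟨h₁, h₂⟩
    rcases mul_eq_zero.mp h₂ with rfl | hline
    · have : l₁ * (13 * l₁ - 48 * k) = 0 := by linear_combination h₁ / 625
      rcases mul_eq_zero.mp this with rfl | h
      · simp
      · right; left; constructor <;> linarith
    · have hsq : (25 * l₁ - 18 * l₂) ^ 2 = 0 := by linear_combination h₁ - 300 * l₁ * hline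
      have := pow_eq_zero_iff two_ne_zero |>.mp hsq
      right; right; constructor <;> linarith
  · rintro (⟨rfl, rfl⟩ | ⟨rfl, rfl⟩ | ⟨rfl, rfl⟩) <;> constructor <;> ring

theorem beta_one_mul_eq {c : ℝ} (hc : c ≠ 0) (ε l₁ l₂ : ℝ) :
    c * (-ε * l₁ + 13 * l₁ ^ 2 / (48 * c) + 3 * l₁ * l₂ / (20 * c) + 27 * l₂ ^ 2 / (2500 * c))
      = ((25 * l₁ - 18 * l₂) ^ 2 + 300 * l₁ * (25 * l₁ + 18 * l₂ - 100 * c * ε)) / 30000 := by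
  field_simp
  ring

theorem beta_two_mul_eq {c : ℝ} (hc : c ≠ 0) (ε l₁ l₂ : ℝ) :
    c * (-ε * l₂ + l₁ * l₂ / (4 * c) + 9 * l₂ ^ 2 / (50 * c))
      = l₂ * (25 * l₁ + 18 * l₂ - 100 * c * ε) / 100 := by
  field_simp
  ring

theorem beta_system_eq_zero_iff {c : ℝ} (hc : c ≠ 0) (ε l₁ l₂ : ℝ) :
    (-ε * l₁ + 13 * l₁ ^ 2 / (48 * c) + 3 * l₁ * l₂ / (20 * c) + 27 * l₂ ^ 2 / (2500 * c) = 0 ∧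
      -ε * l₂ + l₁ * l₂ / (4 * c) + 9 * l₂ ^ 2 / (50 * c) = 0) ↔
    ((l₁, l₂) = (0, 0) ∨ (l₁, l₂) = (48 * c * ε / 13, 0) ∨
      (l₁, l₂) = (2 * c * ε, 25 * c * ε / 9)) := by
  have key := factored_beta_system_iff (c * ε) l₁ l₂
  simp only [← mul_assoc] at key
  rw [← key]
  refine and_congr ?_ ?_
  · rw [← mul_right_inj' hc, mul_zero, beta_one_mul_eq hc, div_eq_zero_iff]
    norm_num
  · rw [← mul_right_inj' hc, mul_zero, beta_two_mul_eq hc, div_eq_zero_iff]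
    norm_num

theorem hasFDerivAt_quadratic (a b c d e : ℝ) (p : Fin 2 → ℝ) :
    HasFDerivAt
      (fun l : Fin 2 → ℝ => a * l 0 + b * l 1 + c * l 0 ^ 2 + d * (l 0 * l 1) + e * l 1 ^ 2)
      ((a + 2 * c * p 0 + d * p 1) • (ContinuousLinearMap.proj 0 : (Fin 2 → ℝ) →L[ℝ] ℝ)
        + (b + d * p 0 + 2 * e * p 1) • (ContinuousLinearMap.proj 1 : (Fin 2 → ℝ) →L[ℝ] ℝ)) p := by
  have hx := hasFDerivAt_apply (𝕜 := ℝ) (0 : Fin 2) p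
  have hy := hasFDerivAt_apply (𝕜 := ℝ) (1 : Fin 2) p
  refine HasFDerivAt.congr_fderiv (((((hx.const_mul a).add (hy.const_mul b)).add
    ((hx.pow 2).const_mul c)).add ((hx.mul hy).const_mul d)).add ((hy.pow 2).const_mul e)) ?_
  ext v
  simp only [Nat.add_one_sub_one, pow_one, nsmul_eq_mul, Nat.cast_ofNat, smul_add,
    add_apply, smul_apply, ContinuousLinearMap.proj_apply, smul_eq_mul]
  ring

theorem fderiv_quadratic_single (a b c d e : ℝ) (p : Fin 2 → ℝ) (j : Fin 2) :
    fderiv ℝ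
      (fun l : Fin 2 → ℝ => a * l 0 + b * l 1 + c * l 0 ^ 2 + d * (l 0 * l 1) + e * l 1 ^ 2)
      p (Pi.single j 1) = ![a + 2 * c * p 0 + d * p 1, b + d * p 0 + 2 * e * p 1] j := by
  rw [(hasFDerivAt_quadratic a b c d e p).fderiv]
  fin_cases j <;> simp

theorem jacobian2_eq (ε : ℝ) (p : Fin 2 → ℝ) :
    jacobian2 ε p =
      !![-ε + 13 * p 0 / (24 * π ^ 2) + 3 * p 1 / (20 * π ^ 2),
          3 * p 0 / (20 * π ^ 2) + 27 * p 1 / (1250 * π ^ 2);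
        p 1 / (4 * π ^ 2), -ε + p 0 / (4 * π ^ 2) + 9 * p 1 / (25 * π ^ 2)] := by
  have h₀ : beta2 ε 0 = fun l => -ε * l 0 + 0 * l 1 + 13 / (48 * π ^ 2) * l 0 ^ 2
      + 3 / (20 * π ^ 2) * (l 0 * l 1) + 27 / (2500 * π ^ 2) * l 1 ^ 2 := by
    funext l
    simp only [beta2, Matrix.cons_val_zero]
    ring
  have h₁ : beta2 ε 1 = fun l => 0 * l 0 + -ε * l 1 + 0 * l 0 ^ 2
      + 1 / (4 * π ^ 2) * (l 0 * l 1) + 9 / (50 * π ^ 2) * l 1 ^ 2 := by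
    funext l
    simp only [beta2, Matrix.cons_val_one, Matrix.cons_val_zero]
    ring
  rw [Matrix.eta_fin_two (jacobian2 ε p)]
  simp only [jacobian2, Matrix.of_apply, h₀, h₁, fderiv_quadratic_single]
  ext i j
  fin_cases i <;> fin_cases j <;> simp <;> ring

theorem det_jacobian2_eq_zero (ε : ℝ) :
    (jacobian2 ε ![2 * π ^ 2 * ε, 25 * π ^ 2 * ε / 9]).det = 0 := by
  rw [jacobian2_eq, Matrix.det_fin_two_of]
  simp only [Matrix.cons_val_zero, Matrix.cons_val_one]
  field_simp
  ring

theorem stmt_13_general (ε : ℝ) :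
    (∀ l₁ l₂ : ℝ,
      (-ε * l₁ + 13 * l₁ ^ 2 / (48 * π ^ 2) + 3 * l₁ * l₂ / (20 * π ^ 2)
          + 27 * l₂ ^ 2 / (2500 * π ^ 2) = 0 ∧
       -ε * l₂ + l₁ * l₂ / (4 * π ^ 2) + 9 * l₂ ^ 2 / (50 * π ^ 2) = 0) ↔
      ((l₁, l₂) = (0, 0) ∨ (l₁, l₂) = (48 * π ^ 2 * ε / 13, 0) ∨
       (l₁, l₂) = (2 * π ^ 2 * ε, 25 * π ^ 2 * ε / 9))) ∧
    (jacobian2 ε ![2 * π ^ 2 * ε, 25 * π ^ 2 * ε / 9]).det = 0 :=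
  ⟨beta_system_eq_zero_iff (pow_ne_zero 2 pi_ne_zero) ε, det_jacobian2_eq_zero ε⟩

/-- The `S₆ × ℤ₂` one-loop beta function system has exactly three real solutions,
`(0,0)`, `(48π²ε/13, 0)` and `(2π²ε, 25π²ε/9)`; the last is a double root: the Jacobian
is singular there. -/
theorem stmt_13 (ε : ℝ) (hε : ε > 0) :
    (∀ l₁ l₂ : ℝ,
      (-ε * l₁ + 13 * l₁ ^ 2 / (48 * π ^ 2) + 3 * l₁ * l₂ / (20 * π ^ 2)
          + 27 * l₂ ^ 2 / (2500 * π ^ 2) = 0 ∧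
       -ε * l₂ + l₁ * l₂ / (4 * π ^ 2) + 9 * l₂ ^ 2 / (50 * π ^ 2) = 0) ↔
      ((l₁, l₂) = (0, 0) ∨ (l₁, l₂) = (48 * π ^ 2 * ε / 13, 0) ∨
       (l₁, l₂) = (2 * π ^ 2 * ε, 25 * π ^ 2 * ε / 9))) ∧
    (jacobian2 ε ![2 * π ^ 2 * ε, 25 * π ^ 2 * ε / 9]).det = 0 :=
  stmt_13_general ε
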